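/- Let a > 1. The sequence of functions F_n : ℝ^d → ℂ defined by F_n(x) = Σ_{k=0}^{n} C_k(n,a) · exp(i·(p·x)·(1 − 2k/n)/ħ) converges pointwise on ℝ^d to F(x) = exp(i·a·(p·x)/ħ) as n → ∞, and the convergence is uniform on every compact subset of ℝ^d. -/

import Mathlib

/-!
Summing the binomial gives `F_n(x) = (cos (t/n) + i a sin (t/n))^n` with `t = p·x/ħ`.
The base differs from `exp (i a t/n)` by `O(t²/n²)`, and since `exp (i a t/n)` has modulus one,
the `n`-th powers differ by `O(t²/n) · exp (O(t²/n))`, uniformly for `t` in a bounded set.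
-/

open scoped RealInnerProductSpace
open Complex Filter Finset

theorem norm_pow_sub_pow_le {R : Type*} [SeminormedCommRing R] [NormOneClass R] {x y : R} {B : ℝ}
    (hx : ‖x‖ ≤ B) (hy : ‖y‖ ≤ B) (n : ℕ) :
    ‖x ^ n - y ^ n‖ ≤ n * B ^ (n - 1) * ‖x - y‖ := by
  have hB : 0 ≤ B := (norm_nonneg x).trans hx
  rw [← geom_sum₂_mul]
  refine (norm_mul_le _ _).trans (mul_le_mul_of_nonneg_right ?_ (norm_nonneg _))
  calc ‖∑ i ∈ range n, x ^ i * y ^ (n - 1 - i)‖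
      ≤ ∑ i ∈ range n, ‖x ^ i * y ^ (n - 1 - i)‖ := norm_sum_le _ _
    _ ≤ ∑ _i ∈ range n, B ^ (n - 1) := sum_le_sum fun i hi => by
        calc ‖x ^ i * y ^ (n - 1 - i)‖ ≤ ‖x‖ ^ i * ‖y‖ ^ (n - 1 - i) :=
              (norm_mul_le _ _).trans (by gcongr <;> exact norm_pow_le _ _)
          _ ≤ B ^ i * B ^ (n - 1 - i) := by gcongr
          _ = B ^ (n - 1) := by rw [← pow_add]; congr 1; have := mem_range.mp hi; omega
    _ = n * B ^ (n - 1) := by simp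

theorem norm_pow_sub_pow_le_mul_exp {R : Type*} [SeminormedCommRing R] [NormOneClass R]
    {z w : R} {δ : ℝ} (hw : ‖w‖ ≤ 1) (hzw : ‖z - w‖ ≤ δ) (n : ℕ) :
    ‖z ^ n - w ^ n‖ ≤ n * δ * Real.exp (n * δ) := by
  have hδ : 0 ≤ δ := (norm_nonneg _).trans hzw
  have hz : ‖z‖ ≤ 1 + δ := by
    calc ‖z‖ = ‖z - w + w‖ := by rw [sub_add_cancel]
      _ ≤ ‖z - w‖ + ‖w‖ := norm_add_le _ _
      _ ≤ 1 + δ := by linarith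
  calc ‖z ^ n - w ^ n‖ ≤ n * (1 + δ) ^ (n - 1) * δ :=
        (norm_pow_sub_pow_le hz (by linarith) n).trans (by gcongr)
    _ ≤ n * Real.exp δ ^ n * δ := by
        gcongr
        calc (1 + δ) ^ (n - 1) ≤ (1 + δ) ^ n := pow_le_pow_right₀ (by linarith) (Nat.sub_le n 1)
          _ ≤ Real.exp δ ^ n := by gcongr; linarith [Real.add_one_le_exp δ]
    _ = n * δ * Real.exp (n * δ) := by rw [Real.exp_nat_mul]; ring

noncomputable def superoscFactor (a θ : ℝ) : ℂ := Real.cos θ + a * Real.sin θ * I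

theorem superoscFactor_eq (a θ : ℝ) :
    superoscFactor a θ
      = (((1 - a) / 2 : ℝ) : ℂ) * exp (-(θ * I)) + (((1 + a) / 2 : ℝ) : ℂ) * exp (θ * I) := by
  rw [superoscFactor, ← neg_mul, exp_mul_I, exp_mul_I, cos_neg, sin_neg, ← ofReal_cos, ← ofReal_sin]
  push_cast
  ring

theorem sum_choose_mul_exp_eq_superoscFactor_pow (a t : ℝ) {n : ℕ} (hn : n ≠ 0) :
    ∑ k ∈ range (n + 1), ((n.choose k : ℂ) * (((1 + a) / 2 : ℝ) : ℂ) ^ (n - k)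
        * (((1 - a) / 2 : ℝ) : ℂ) ^ k) * exp (t * I * (1 - 2 * k / n))
      = superoscFactor a (t / n) ^ n := by
  rw [superoscFactor_eq, add_pow]
  refine sum_congr rfl fun k hk => ?_
  have hkn : k ≤ n := Nat.lt_succ_iff.mp (mem_range.mp hk)
  have hexp : exp (t * I * (1 - 2 * k / n))
      = exp ((t / n : ℝ) * I) ^ (n - k) * exp (-((t / n : ℝ) * I)) ^ k := by
    rw [← exp_nat_mul, ← exp_nat_mul, ← exp_add, Nat.cast_sub hkn]
    congr 1
    push_cast
    field_simp
    ring
  rw [hexp]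
  ring

theorem norm_exp_mul_I_sub_one_sub_le {θ : ℝ} (hθ : |θ| ≤ 1) :
    ‖exp (θ * I) - 1 - θ * I‖ ≤ θ ^ 2 := by
  have hnorm : ‖(θ : ℂ) * I‖ = |θ| := by simp
  simpa [hnorm, sq_abs] using norm_exp_sub_one_sub_id_le (hnorm.trans_le hθ)

theorem norm_superoscFactor_sub_exp_le (a : ℝ) {θ : ℝ} (hθ : |θ| ≤ 1) (haθ : |a * θ| ≤ 1) :
    ‖superoscFactor a θ - exp (a * θ * I)‖ ≤ (1 + |a| + a ^ 2) * θ ^ 2 := by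
  set E : ℝ → ℂ := fun s => exp (s * I) - 1 - s * I
  -- the constant and first-order terms cancel since `(1 - a)/2 + (1 + a)/2 = 1` and `(1 + a)/2 - (1 - a)/2 = a`
  have hsplit : superoscFactor a θ - exp (a * θ * I)
      = (((1 - a) / 2 : ℝ) : ℂ) * E (-θ) + (((1 + a) / 2 : ℝ) : ℂ) * E θ - E (a * θ) := by
    simp only [E, superoscFactor_eq, ofReal_neg, neg_mul]
    push_cast
    ring
  have hcoef : |(1 - a) / 2| + |(1 + a) / 2| ≤ 1 + |a| := by
    rw [abs_div, abs_div, abs_two]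
    linarith [abs_sub (1 : ℝ) a, abs_add_le (1 : ℝ) a, abs_one (α := ℝ)]
  rw [hsplit]
  calc _ ≤ ‖(((1 - a) / 2 : ℝ) : ℂ) * E (-θ)‖ + ‖(((1 + a) / 2 : ℝ) : ℂ) * E θ‖ + ‖E (a * θ)‖ :=
        norm_sub_le_of_le (norm_add_le _ _) le_rfl
    _ ≤ |(1 - a) / 2| * θ ^ 2 + |(1 + a) / 2| * θ ^ 2 + (a * θ) ^ 2 := by
        simp only [norm_mul, norm_real, Real.norm_eq_abs]
        gcongr
        · simpa only [neg_sq] using norm_exp_mul_I_sub_one_sub_le (θ := -θ) (by rwa [abs_neg])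
        · exact norm_exp_mul_I_sub_one_sub_le hθ
        · exact norm_exp_mul_I_sub_one_sub_le haθ
    _ ≤ (1 + |a| + a ^ 2) * θ ^ 2 := by nlinarith [sq_nonneg θ]

theorem norm_superoscFactor_pow_sub_exp_le (a : ℝ) {M t : ℝ} {n : ℕ} (hn : n ≠ 0)
    (ht : |t| ≤ M) (hnM : (1 + |a|) * M ≤ n) :
    ‖superoscFactor a (t / n) ^ n - exp (a * t * I)‖
      ≤ (1 + |a| + a ^ 2) * M ^ 2 * Real.exp ((1 + |a| + a ^ 2) * M ^ 2) / n := by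
  set K := 1 + |a| + a ^ 2
  have hn0 : (0 : ℝ) < n := by positivity
  have hM : 0 ≤ M := (abs_nonneg t).trans ht
  have hθ : |t / n| ≤ 1 := by
    rw [abs_div, Nat.abs_cast, div_le_one hn0]; nlinarith [abs_nonneg a]
  have haθ : |a * (t / n)| ≤ 1 := by
    rw [abs_mul, abs_div, Nat.abs_cast, mul_div_assoc', div_le_one hn0]
    nlinarith [abs_nonneg a]
  have hpow : exp (a * t * I) = exp (a * (t / n : ℝ) * I) ^ n := by
    rw [← exp_nat_mul]; congr 1; push_cast; field_simp
  have hnθ : n * (K * (t / n) ^ 2) ≤ K * M ^ 2 / n := by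
    rw [div_pow, show (n : ℝ) * (K * (t ^ 2 / n ^ 2)) = K * t ^ 2 / n by field_simp]
    have ht2 : t ^ 2 ≤ M ^ 2 := by rw [← sq_abs]; exact pow_le_pow_left₀ (abs_nonneg t) ht 2
    gcongr
  rw [hpow]
  refine (norm_pow_sub_pow_le_mul_exp (by rw [← ofReal_mul, norm_exp_ofReal_mul_I])
    (norm_superoscFactor_sub_exp_le a hθ haθ) n).trans ?_
  rw [mul_div_right_comm]
  have hn1 : (1 : ℝ) ≤ n := by exact_mod_cast Nat.one_le_iff_ne_zero.mpr hn
  exact mul_le_mul hnθ (Real.exp_le_exp.mpr (hnθ.trans (div_le_self (by positivity) hn1)))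
    (by positivity) (by positivity)

theorem tendstoUniformlyOn_superoscFactor_pow (a M : ℝ) :
    TendstoUniformlyOn (fun (n : ℕ) t => superoscFactor a (t / n) ^ n) (fun t => exp (a * t * I))
      atTop (Metric.closedBall 0 M) := by
  rw [Metric.tendstoUniformlyOn_iff]
  intro ε hε
  filter_upwards [(tendsto_const_div_atTop_nhds_zero_nat _).eventually (gt_mem_nhds hε),
    eventually_ne_atTop 0, tendsto_natCast_atTop_atTop.eventually_ge_atTop ((1 + |a|) * M)]
    with n hsmall hn hnM t ht
  rw [Metric.mem_closedBall, dist_zero_right, Real.norm_eq_abs] at ht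
  rw [dist_comm, dist_eq_norm]
  exact (norm_superoscFactor_pow_sub_exp_le a hn ht hnM).trans_lt hsmall

theorem superoscillation_convergence
    (hbar : ℝ) (d : ℕ)
    (p : EuclideanSpace ℝ (Fin d)) (a : ℝ)
    (F : ℕ → EuclideanSpace ℝ (Fin d) → ℂ)
    (hF : ∀ (n : ℕ) (x : EuclideanSpace ℝ (Fin d)),
      F n x = ∑ k ∈ Finset.range (n + 1),
        ((n.choose k : ℂ) * (((1 + a) / 2 : ℝ) : ℂ) ^ (n - k)
            * (((1 - a) / 2 : ℝ) : ℂ) ^ k)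
          * Complex.exp (Complex.I * ((⟪p, x⟫ : ℝ) : ℂ)
              * (1 - 2 * (k : ℂ) / (n : ℂ)) / (hbar : ℂ))) :
    (∀ x : EuclideanSpace ℝ (Fin d),
      Filter.Tendsto (fun n : ℕ => F n x) Filter.atTop
        (nhds (Complex.exp (Complex.I * (a : ℂ) * ((⟪p, x⟫ : ℝ) : ℂ) / (hbar : ℂ)))))
    ∧ ∀ K : Set (EuclideanSpace ℝ (Fin d)), IsCompact K →
        TendstoUniformlyOn (fun n x => F n x)
          (fun x => Complex.exp (Complex.I * (a : ℂ) * ((⟪p, x⟫ : ℝ) : ℂ) / (hbar : ℂ)))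
          Filter.atTop K := by
  set phase : EuclideanSpace ℝ (Fin d) → ℝ := fun x => ⟪p, x⟫ / hbar
  have hF_eq : ∀ n ≠ 0, ∀ x, F n x = superoscFactor a (phase x / n) ^ n := by
    intro n hn x
    rw [hF, ← sum_choose_mul_exp_eq_superoscFactor_pow a _ hn]
    refine sum_congr rfl fun k _ => ?_
    congr 2
    simp only [phase]
    push_cast
    ring
  have hlimit : ∀ x, exp (I * a * ⟪p, x⟫ / hbar) = exp (a * phase x * I) := fun x =>
    congrArg exp (by simp only [phase]; push_cast; ring)
  have uniform : ∀ K, IsCompact K → TendstoUniformlyOn (fun n x => F n x)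
      (fun x => exp (I * a * ⟪p, x⟫ / hbar)) atTop K := by
    intro K hK
    obtain ⟨M, hM⟩ := (hK.image (by fun_prop : Continuous phase)).isBounded.subset_closedBall 0
    refine (((tendstoUniformlyOn_superoscFactor_pow a M).comp phase).mono
      (Set.image_subset_iff.mp hM)).congr ?_ |>.congr_right fun x _ => (hlimit x).symm
    filter_upwards [eventually_ne_atTop 0] with n hn x _
    exact (hF_eq n hn x).symm
  exact ⟨fun x => (uniform {x} isCompact_singleton).tendsto_at rfl, uniform⟩
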